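/- arXiv:1510.05050 — 4 statements merged into one kernel-verified Lean document; each statement's English description precedes it below -/
import Mathlib

section
/- Let λ = ρe^{iφ} with ρ ≥ 0, φ ∈ [0,π/2), m > 0, fix q ∈ ℤ, and let Γ : P → ℝ be any real function on P = {p⃗ ∈ ℤ³ : Σᵢpᵢ = 0}. Then |Σ_{p⃗∈P, p₁=q} C₀(p⃗)/(1 − i√(2λ)C₀(p⃗)Γ(p⃗))| ≤ (1/cos(φ/2)) · Σ_{p⃗∈P, p₁=q} 1/(p⃗²+m²), and the latter sum is finite. -/
open Complex

/-- The set of integer momentum triples satisfying the closure constraint. -/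
def Momenta : Set (ℤ × ℤ × ℤ) := {v | v.1 + v.2.1 + v.2.2 = 0}

/-- Momenta with first component fixed to `q`. -/
def FixedMomenta (q : ℤ) : Set (ℤ × ℤ × ℤ) :=
  {v | v.1 + v.2.1 + v.2.2 = 0 ∧ v.1 = q}

/-- The free propagator `C₀(p⃗) = 1/(p⃗² + m²)`. -/
noncomputable def C0 (m : ℝ) (v : ℤ × ℤ × ℤ) : ℝ :=
  1 / ((v.1 : ℝ)^2 + (v.2.1 : ℝ)^2 + (v.2.2 : ℝ)^2 + m^2)

open ComplexConjugate

/-!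
For `ρ ≥ 0` and `0 ≤ φ < π/2` the principal root is `√(2λ) = √(2ρ) e^{iφ/2}`, so each
denominator is `1 - i e^{iφ/2} t` with `t` real. Such a point lies on the line through `1` in
direction `i e^{iφ/2}`, whose distance from the origin is `cos (φ/2)`; hence every summand has
norm at most `C₀(p⃗) / cos (φ/2)`. On the slice `p₁ = q` the momentum is determined by `p₂`, and
`C₀(p⃗) ≤ 1/p₂²` for `p₂ ≠ 0`, so the majorant is summable.
-/

lemma ofReal_mul_exp_cpow_half {r θ : ℝ} (hr : 0 ≤ r) (hθ₁ : -Real.pi < θ) (hθ₂ : θ ≤ Real.pi) :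
    ((r : ℂ) * exp (θ * I)) ^ (1 / 2 : ℂ) = (√r : ℂ) * exp ((θ / 2 : ℝ) * I) := by
  rcases hr.eq_or_lt with rfl | hr
  · simp
  rw [cpow_def_of_ne_zero (mul_ne_zero (ofReal_ne_zero.mpr hr.ne') (exp_ne_zero _)),
    log_ofReal_mul hr (exp_ne_zero _), log_exp (by simpa) (by simpa), ← Real.exp_log hr,
    ← Real.exp_half, Real.log_exp, ofReal_exp, ← exp_add]
  congr 1
  push_cast
  ring

lemma cos_le_norm_one_sub_I_mul_mul (r θ t : ℝ) :
    Real.cos θ ≤ ‖1 - I * (r * exp (θ * I)) * t‖ := by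
  -- rotating by the unit `conj (e^{iθ})` makes the `t`-dependent part purely imaginary
  have hunit : ‖exp (θ * I)‖ = 1 := norm_exp_ofReal_mul_I θ
  have hconj : conj (exp (θ * I)) * exp (θ * I) = 1 := by
    rw [mul_comm, mul_conj, normSq_eq_norm_sq, hunit]; norm_num
  calc Real.cos θ = (conj (exp (θ * I)) * (1 - I * (r * exp (θ * I)) * t)).re := by
        rw [show ∀ u e : ℂ, u * (1 - I * (r * e) * t) = u - I * r * t * (u * e) by intros; ring,
          hconj]
        simp [exp_ofReal_mul_I_re]
    _ ≤ ‖conj (exp (θ * I)) * (1 - I * (r * exp (θ * I)) * t)‖ := re_le_norm _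
    _ = ‖1 - I * (r * exp (θ * I)) * t‖ := by rw [norm_mul, RCLike.norm_conj, hunit, one_mul]

lemma norm_ofReal_div_one_sub_I_mul_mul_le {c r θ t : ℝ} (hc : 0 ≤ c) (hθ : 0 < Real.cos θ) :
    ‖(c : ℂ) / (1 - I * (r * exp (θ * I)) * t)‖ ≤ 1 / Real.cos θ * c := by
  rw [norm_div, norm_real, Real.norm_of_nonneg hc, one_div_mul_eq_div]
  exact div_le_div_of_nonneg_left hc hθ (cos_le_norm_one_sub_I_mul_mul r θ t)

lemma C0_nonneg (m : ℝ) (v : ℤ × ℤ × ℤ) : 0 ≤ C0 m v := by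
  unfold C0; positivity

lemma C0_le_one_div_sq (m : ℝ) {v : ℤ × ℤ × ℤ} (hv : v.2.1 ≠ 0) :
    C0 m v ≤ 1 / (v.2.1 : ℝ) ^ 2 := by
  have : (0 : ℝ) < (v.2.1 : ℝ) ^ 2 := by positivity
  unfold C0
  gcongr
  nlinarith [sq_nonneg (v.1 : ℝ), sq_nonneg (v.2.2 : ℝ), sq_nonneg m]

lemma summable_C0 (m : ℝ) (q : ℤ) : Summable (fun v : FixedMomenta q => C0 m v) := by
  have hinj : Function.Injective (fun v : FixedMomenta q => v.1.2.1) := by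
    rintro ⟨⟨a, b, c⟩, hs, rfl⟩ ⟨⟨a', b', c'⟩, hs', h⟩ (rfl : b = b')
    simp only at hs hs' h
    ext <;> simp only <;> omega
  refine Summable.of_norm_bounded_eventually
    ((Real.summable_one_div_int_pow.mpr one_lt_two).comp_injective hinj) ?_
  filter_upwards [hinj.tendsto_cofinite.eventually (Filter.eventually_cofinite_ne 0)] with v hv
  rw [Real.norm_of_nonneg (C0_nonneg m v)]
  exact C0_le_one_div_sq m hv

theorem lemma2_leaf_bound_general (ρ φ m : ℝ) (hρ : 0 ≤ ρ) (hφ0 : 0 ≤ φ)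
    (hφ : φ < Real.pi / 2) (q : ℤ) (l : ℂ)
    (hl : l = (ρ : ℂ) * Complex.exp (Complex.I * φ))
    (Γ : Momenta → ℝ) :
    ‖∑' v : FixedMomenta q,
        (C0 m v : ℂ) /
          (1 - Complex.I * (2 * l) ^ (1/2 : ℂ) * (C0 m v : ℂ)
            * (Γ ⟨v.1, v.2.1⟩ : ℂ))‖
      ≤ (1 / Real.cos (φ / 2)) * ∑' v : FixedMomenta q, C0 m v
    ∧ Summable (fun v : FixedMomenta q => C0 m v) := by
  have hsum := summable_C0 m q
  have hcos : 0 < Real.cos (φ / 2) :=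
    Real.cos_pos_of_mem_Ioo ⟨by linarith [Real.pi_pos], by linarith⟩
  have hsqrt : (2 * l) ^ (1 / 2 : ℂ) = (√(2 * ρ) : ℂ) * exp ((φ / 2 : ℝ) * I) := by
    rw [← ofReal_mul_exp_cpow_half (by positivity) (by linarith [Real.pi_pos]) (by linarith),
      hl, mul_comm I, ← mul_assoc]
    push_cast
    rfl
  refine ⟨?_, hsum⟩
  rw [← tsum_mul_left]
  refine tsum_of_norm_bounded (hsum.mul_left _).hasSum fun v => ?_
  rw [hsqrt, mul_assoc _ (C0 m v : ℂ), ← ofReal_mul]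
  exact norm_ofReal_div_one_sub_I_mul_mul_le (C0_nonneg m v) hcos

theorem lemma2_leaf_bound (ρ φ m : ℝ) (hρ : 0 ≤ ρ) (hφ0 : 0 ≤ φ)
    (hφ : φ < Real.pi / 2) (hm : 0 < m) (q : ℤ) (l : ℂ)
    (hl : l = (ρ : ℂ) * Complex.exp (Complex.I * φ))
    (Γ : Momenta → ℝ) :
    ‖∑' v : FixedMomenta q,
        (C0 m v : ℂ) /
          (1 - Complex.I * (2 * l) ^ (1/2 : ℂ) * (C0 m v : ℂ)
            * (Γ ⟨v.1, v.2.1⟩ : ℂ))‖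
      ≤ (1 / Real.cos (φ / 2)) * ∑' v : FixedMomenta q, C0 m v
    ∧ Summable (fun v : FixedMomenta q => C0 m v) :=
  lemma2_leaf_bound_general ρ φ m hρ hφ0 hφ q l hl Γ
end

section
/- Suppose for each integer n ≥ 2 the n-th term of a series is bounded in modulus by Ω(n)·(2|λ|)ⁿ·Kⁿ/(n!·cos^{2n}(φ/2)) where Ω(n) ≤ 2√(2e)·3^{n−1}·(2√(π/e))^{n−1}·n!. Then the series converges absolutely whenever |λ| < cos²(φ/2)/(24√(π/e)·K). -/
/-! The factorial in the bound on `Ω n` cancels the `n!` in the denominator, so the `n`-th term is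
at most a constant times `rⁿ` with `r = 12 √(π/e) K |λ| / cos²(φ/2)`, and the smallness assumption
on `|λ|` is exactly `r < 1`: the series is dominated by a convergent geometric series. -/

open Real Filter

lemma mul_pow_div_factorial_le_geometric {A B x ω : ℝ} {n : ℕ} (hn : 1 ≤ n) (hB : 0 < B)
    (hx : 0 ≤ x) (hω : ω ≤ A * B ^ (n - 1) * n.factorial) :
    ω * x ^ n / n.factorial ≤ A / B * (B * x) ^ n := by
  have hfac : (0 : ℝ) < n.factorial := by positivity
  calc ω * x ^ n / n.factorial
      ≤ A * B ^ (n - 1) * n.factorial * x ^ n / n.factorial := by gcongr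
    _ = A / B * (B * x) ^ n := by
      obtain ⟨k, rfl⟩ := Nat.exists_eq_add_of_le' hn
      field_simp
      simp only [Nat.add_sub_cancel, mul_pow, pow_succ]
      ring

lemma mul_pow_mul_pow_div_eq (ω a b c m : ℝ) (n : ℕ) :
    ω * a ^ n * b ^ n / (m * c ^ (2 * n)) = ω * (a * b / c ^ 2) ^ n / m := by
  rw [pow_mul, div_pow, mul_pow]
  ring

theorem tree_expansion_convergence_general (u : ℕ → ℂ) (Ω : ℕ → ℝ) (K : ℝ)
    (l : ℂ) (φ : ℝ)
    (hu : ∀ n : ℕ, 2 ≤ n →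
      ‖u n‖ ≤ Ω n * (2 * ‖l‖) ^ n * K ^ n
        / (Nat.factorial n * Real.cos (φ / 2) ^ (2 * n)))
    (hΩ : ∀ n : ℕ, 2 ≤ n →
      Ω n ≤ 2 * Real.sqrt (2 * Real.exp 1) * 3 ^ (n - 1)
        * (2 * Real.sqrt (Real.pi / Real.exp 1)) ^ (n - 1) * Nat.factorial n)
    (hsmall : ‖l‖ < Real.cos (φ / 2) ^ 2
        / (24 * Real.sqrt (Real.pi / Real.exp 1) * K)) :
    Summable (fun n : ℕ => ‖u (n + 2)‖) := by
  set s := √(π / rexp 1)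
  set c := cos (φ / 2) ^ 2
  have hs : 0 < s := sqrt_pos.mpr (by positivity)
  obtain ⟨hc, hsK⟩ : 0 < c ∧ 0 < 24 * s * K := by
    rcases div_pos_iff.mp ((norm_nonneg l).trans_lt hsmall) with h | ⟨h, -⟩
    · exact h
    · exact absurd h (sq_nonneg _).not_gt
  set x := 2 * ‖l‖ * K / c
  have hK : 0 < K := pos_of_mul_pos_right hsK (by positivity)
  have hx : 0 ≤ x := by positivity
  have hr : 6 * s * x < 1 := by
    rw [lt_div_iff₀ hsK] at hsmall
    rw [show 6 * s * x = 12 * s * K * ‖l‖ / c by ring, div_lt_one hc]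
    linarith
  refine (summable_nat_add_iff (f := fun n => ‖u n‖) 2).mpr <|
    Summable.of_norm_bounded_eventually_nat
      ((summable_geometric_of_lt_one (by positivity) hr).mul_left
        (2 * √(2 * rexp 1) / (6 * s))) ?_
  filter_upwards [eventually_ge_atTop 2] with n hn
  have hΩn : Ω n ≤ 2 * √(2 * rexp 1) * (6 * s) ^ (n - 1) * n.factorial := by
    rw [show (6 : ℝ) * s = 3 * (2 * s) by ring, mul_pow, ← mul_assoc (2 * √(2 * rexp 1))]
    exact hΩ n hn
  calc ‖‖u n‖‖ = ‖u n‖ := norm_norm _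
    _ ≤ Ω n * x ^ n / n.factorial := (hu n hn).trans_eq (mul_pow_mul_pow_div_eq ..)
    _ ≤ _ := mul_pow_div_factorial_le_geometric (by omega) (by positivity) hx hΩn

theorem tree_expansion_convergence (u : ℕ → ℂ) (Ω : ℕ → ℝ) (K : ℝ) (hK : 0 < K)
    (l : ℂ) (φ : ℝ) (hl : l = (‖l‖ : ℂ) * Complex.exp (Complex.I * φ))
    (hu : ∀ n : ℕ, 2 ≤ n →
      ‖u n‖ ≤ Ω n * (2 * ‖l‖) ^ n * K ^ n
        / (Nat.factorial n * Real.cos (φ / 2) ^ (2 * n)))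
    (hΩ : ∀ n : ℕ, 2 ≤ n →
      Ω n ≤ 2 * Real.sqrt (2 * Real.exp 1) * 3 ^ (n - 1)
        * (2 * Real.sqrt (Real.pi / Real.exp 1)) ^ (n - 1) * Nat.factorial n)
    (hsmall : ‖l‖ < Real.cos (φ / 2) ^ 2
        / (24 * Real.sqrt (Real.pi / Real.exp 1) * K)) :
    Summable (fun n : ℕ => ‖u (n + 2)‖) :=
  tree_expansion_convergence_general u Ω K l φ hu hΩ hsmall
end

section
/- If the Taylor remainders of an analytic function f on the disk {λ : Re(1/λ) > 1/R} satisfy |f(λ) − Σ_{k<r} f_k λ^k| ≤ K·σ^r·r!·|λ|^r uniformly in r, then the Borel transform B(t) = Σ_n f_n tⁿ/n! has radius of convergence at least 1/σ. -/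
/-!
The coefficient `a n` times `l ^ n` is the difference of the remainders of orders `n` and `n + 1`,
so at a small real point `ε` the bounds give `‖a n‖ ≤ K σⁿ n! + K σⁿ⁺¹ (n+1)! ε`; letting
`ε → 0⁺` yields `‖a n‖ ≤ K σⁿ n!`, and the Borel series is then dominated by `K (σ ‖t‖)ⁿ`.
-/

open Filter Topology

section RemainderBounds

variable {𝕜 : Type*} [NormedField 𝕜] {f : 𝕜 → 𝕜} {a : ℕ → 𝕜} {b : ℕ → ℝ} {S : Set 𝕜}

theorem norm_coeff_le_add_of_remainder_bound
    (hrem : ∀ r, ∀ l ∈ S, ‖f l - ∑ k ∈ Finset.range r, a k * l ^ k‖ ≤ b r * ‖l‖ ^ r)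
    (n : ℕ) {l : 𝕜} (hl : l ∈ S) (hl0 : l ≠ 0) :
    ‖a n‖ ≤ b n + b (n + 1) * ‖l‖ := by
  have hpos : 0 < ‖l‖ ^ n := pow_pos (norm_pos_iff.mpr hl0) n
  have hcoeff : a n * l ^ n = (f l - ∑ k ∈ Finset.range n, a k * l ^ k)
      - (f l - ∑ k ∈ Finset.range (n + 1), a k * l ^ k) := by
    rw [Finset.sum_range_succ]; ring
  refine le_of_mul_le_mul_right ?_ hpos
  calc ‖a n‖ * ‖l‖ ^ n = ‖a n * l ^ n‖ := by rw [norm_mul, norm_pow]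
    _ ≤ b n * ‖l‖ ^ n + b (n + 1) * ‖l‖ ^ (n + 1) := by
      rw [hcoeff]; exact (norm_sub_le _ _).trans (add_le_add (hrem n l hl) (hrem (n + 1) l hl))
    _ = (b n + b (n + 1) * ‖l‖) * ‖l‖ ^ n := by ring

theorem norm_coeff_le_of_remainder_bound {l : ℝ → 𝕜}
    (hrem : ∀ r, ∀ l ∈ S, ‖f l - ∑ k ∈ Finset.range r, a k * l ^ k‖ ≤ b r * ‖l‖ ^ r)
    (hl : Tendsto (fun ε => ‖l ε‖) (𝓝[>] 0) (𝓝 0))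
    (hlS : ∀ᶠ ε in 𝓝[>] 0, l ε ∈ S ∧ l ε ≠ 0) (n : ℕ) :
    ‖a n‖ ≤ b n := by
  have hlim : Tendsto (fun ε => b n + b (n + 1) * ‖l ε‖) (𝓝[>] 0) (𝓝 (b n)) := by
    simpa using tendsto_const_nhds.add (hl.const_mul (b (n + 1)))
  exact ge_of_tendsto hlim <| hlS.mono fun ε ⟨hS, h0⟩ =>
    norm_coeff_le_add_of_remainder_bound hrem n hS h0

end RemainderBounds

theorem summable_borel_of_norm_le {a : ℕ → ℂ} {K σ : ℝ}
    (ha : ∀ n, ‖a n‖ ≤ K * σ ^ n * n.factorial) {t : ℂ} (hσ : 0 ≤ σ) (ht : σ * ‖t‖ < 1) :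
    Summable fun n => a n * t ^ n / (n.factorial : ℂ) := by
  refine Summable.of_norm_bounded
    ((summable_geometric_of_lt_one (by positivity) ht).mul_left K) fun n => ?_
  have hfac : (0 : ℝ) < n.factorial := mod_cast n.factorial_pos
  rw [norm_div, norm_mul, norm_pow, Complex.norm_natCast, div_le_iff₀ hfac]
  calc ‖a n‖ * ‖t‖ ^ n ≤ K * σ ^ n * n.factorial * ‖t‖ ^ n := by gcongr; exact ha n
    _ = K * (σ * ‖t‖) ^ n * n.factorial := by ring

theorem eventually_ofReal_mem_re_inv_gt (R : ℝ) :
    ∀ᶠ ε : ℝ in 𝓝[>] 0, (ε : ℂ) ∈ {l : ℂ | l ≠ 0 ∧ 1 / R < (1 / l).re} := by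
  filter_upwards [self_mem_nhdsWithin, tendsto_inv_nhdsGT_zero.eventually_gt_atTop (1 / R)]
    with ε (hε : 0 < ε) hR
  refine ⟨mod_cast hε.ne', ?_⟩
  rwa [← Complex.ofReal_one, ← Complex.ofReal_div, Complex.ofReal_re, one_div ε]

theorem borel_transform_radius_general (f : ℂ → ℂ) (a : ℕ → ℂ) (K σ R : ℝ)
    (hrem : ∀ r : ℕ, ∀ l ∈ {l : ℂ | l ≠ 0 ∧ 1 / R < (1 / l).re},
      ‖f l - ∑ k ∈ Finset.range r, a k * l ^ k‖
        ≤ K * σ ^ r * Nat.factorial r * ‖l‖ ^ r) :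
    ∀ t : ℂ, ‖t‖ < 1 / σ →
      Summable (fun n : ℕ => a n * t ^ n / (Nat.factorial n : ℂ)) := by
  intro t ht
  have hσ : 0 < σ := one_div_pos.mp ((norm_nonneg t).trans_lt ht)
  have hcoeff : ∀ n, ‖a n‖ ≤ K * σ ^ n * n.factorial := by
    refine norm_coeff_le_of_remainder_bound (l := fun ε : ℝ => (ε : ℂ)) hrem ?_ ?_
    · simpa using (continuous_norm.tendsto (0 : ℝ)).mono_left nhdsWithin_le_nhds
    · filter_upwards [eventually_ofReal_mem_re_inv_gt R] with ε hε using ⟨hε, hε.1⟩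
  exact summable_borel_of_norm_le hcoeff hσ.le (by rwa [lt_div_iff₀ hσ, mul_comm] at ht)

theorem borel_transform_radius (f : ℂ → ℂ) (a : ℕ → ℂ) (K σ R : ℝ)
    (hK : 0 < K) (hσ : 0 < σ) (hR : 0 < R)
    (hf : AnalyticOn ℂ f {l : ℂ | l ≠ 0 ∧ 1 / R < (1 / l).re})
    (hrem : ∀ r : ℕ, ∀ l ∈ {l : ℂ | l ≠ 0 ∧ 1 / R < (1 / l).re},
      ‖f l - ∑ k ∈ Finset.range r, a k * l ^ k‖
        ≤ K * σ ^ r * Nat.factorial r * ‖l‖ ^ r) :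
    ∀ t : ℂ, ‖t‖ < 1 / σ →
      Summable (fun n : ℕ => a n * t ^ n / (Nat.factorial n : ℂ)) :=
  borel_transform_radius_general f a K σ R hrem
end

section
/- For a connected melonic graph of the rank-3 model with V ≥ 1 vertices and N external lines, the divergence degree ω = 1 + N/2 − 3V satisfies, since N ≤ 2(V+1), ω ≤ 2(1−V) ≤ 0, with equality ω = 0 only when V = 1 and N = 4. -/
theorem melonic_divergence_degree (V N : ℕ) (hV : 1 ≤ V) (hN : N ≤ 2 * (V + 1)) :
    (1 + (N : ℝ) / 2 - 3 * V ≤ 2 * (1 - (V : ℝ)))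
    ∧ (2 * (1 - (V : ℝ)) ≤ 0)
    ∧ (1 + (N : ℝ) / 2 - 3 * V = 0 → V = 1 ∧ N = 4) := by
  have hNr : (N : ℝ) ≤ 2 * ((V : ℝ) + 1) := by exact_mod_cast hN
  have hVr : (1 : ℝ) ≤ (V : ℝ) := by exact_mod_cast hV
  refine ⟨by linarith, by linarith, fun h => ?_⟩
  have hV1 : (V : ℝ) = 1 := by nlinarith
  have hVn : V = 1 := by exact_mod_cast hV1
  have hNr4 : (N : ℝ) = 4 := by rw [hV1] at h; linarith
  exact ⟨hVn, by exact_mod_cast hNr4⟩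
end
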